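/- arXiv:2511.06643 — 2 statements merged into one kernel-verified Lean document; each statement's English description precedes it below -/
import Mathlib

section
/- Let G be a connected threshold graph with stepwise adjacency matrix (a_{ij}) and 2 ≤ q < k < h < p with a_{pq}=0, a_{pj}=1 for j<q, a_{iq}=1 for q<i<p, a_{hk}=1, a_{hj}=0 for j>k, a_{ik}=0 for i>h. If x is the Perron vector of A_α(G) with eigenvalue ρ₁, then (ρ₁ - kα)(x_h - x_p) = (k-q+1)·α·x_p + (1-α)·(x_q + x_{q+1} + ... + x_k). -/
open SimpleGraph

/-- The graph `2K₂` on four vertices: two disjoint edges. -/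
def twoK2 : SimpleGraph (Fin 4) :=
  SimpleGraph.fromRel (fun a b => (a = 0 ∧ b = 1) ∨ (a = 2 ∧ b = 3))

/-- A graph is a threshold graph if it has no induced subgraph isomorphic to
`2K₂`, `C₄` or `P₄`.  (Graph embeddings are induced-subgraph embeddings.) -/
def IsThreshold {V : Type} (G : SimpleGraph V) : Prop :=
  IsEmpty (twoK2 ↪g G) ∧ IsEmpty (SimpleGraph.cycleGraph 4 ↪g G) ∧
    IsEmpty (SimpleGraph.pathGraph 4 ↪g G)

open Matrix

noncomputable def Aalpha {n : ℕ} (G : SimpleGraph (Fin n)) (α : ℝ) :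
    Matrix (Fin n) (Fin n) ℝ :=
  letI := Classical.decRel G.Adj
  α • Matrix.diagonal (fun v => (G.degree v : ℝ)) + (1 - α) • G.adjMatrix ℝ

def IsMaxEigenvalue {n : ℕ} (M : Matrix (Fin n) (Fin n) ℝ) (q : ℝ) : Prop :=
  (∃ x : Fin n → ℝ, x ≠ 0 ∧ M.mulVec x = q • x) ∧
  ∀ (μ : ℝ) (x : Fin n → ℝ), x ≠ 0 → M.mulVec x = μ • x → μ ≤ q

/-- The vertex `v_i` (1-indexed, as in the paper) of a graph on `Fin n`;
for `1 ≤ i ≤ n` this is the element `i - 1` of `Fin n`. -/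
def vx {n : ℕ} (hn : 0 < n) (i : ℕ) : Fin n := ⟨(i - 1) % n, Nat.mod_lt _ hn⟩

/-- The adjacency matrix of `G` (with the 1-indexed vertex ordering `vx`) is
stepwise: if `h > k` and `v_h ~ v_k`, then `v_i ~ v_j` for all `j < i ≤ h`, `j ≤ k`. -/
def Stepwise {n : ℕ} (hn : 0 < n) (G : SimpleGraph (Fin n)) : Prop :=
  ∀ h k : ℕ, 1 ≤ k → k < h → h ≤ n → G.Adj (vx hn h) (vx hn k) →
    ∀ i j : ℕ, 1 ≤ j → j < i → i ≤ h → j ≤ k → G.Adj (vx hn i) (vx hn j)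

/-! In a stepwise adjacency matrix the neighbourhoods of `v_h` and `v_p` are the initial segments
`{v_1, …, v_k}` and `{v_1, …, v_{q-1}}`. A vertex `v` whose neighbourhood is `{v_1, …, v_b}` has
degree `b`, so its row of `ρ₁ x = A_α x` reads `ρ₁ x_v = α b x_v + (1 - α)(x_1 + ⋯ + x_b)`;
subtracting the row of `v_p` from that of `v_h` leaves exactly the sum `x_q + ⋯ + x_k`. -/

lemma vx_val {n : ℕ} (hn : 0 < n) {i : ℕ} (hi : i ≤ n) : (vx hn i : ℕ) = i - 1 :=
  Nat.mod_eq_of_lt (by omega)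

lemma vx_injOn {n : ℕ} (hn : 0 < n) : Set.InjOn (vx hn) (Set.Icc 1 n) := by
  intro i hi j hj hij
  have := congrArg Fin.val hij
  rw [vx_val hn hi.2, vx_val hn hj.2] at this
  grind

lemma vx_val_add_one {n : ℕ} (hn : 0 < n) (u : Fin n) : vx hn (u + 1) = u :=
  Fin.ext (by rw [vx_val hn (by omega)]; simp)

lemma Aalpha_mulVec_apply {n : ℕ} (G : SimpleGraph (Fin n)) [DecidableRel G.Adj] (α : ℝ)
    (x : Fin n → ℝ) (v : Fin n) :
    (Aalpha G α *ᵥ x) v = α * G.degree v * x v + (1 - α) * ∑ u ∈ G.neighborFinset v, x u := by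
  obtain rfl : ‹DecidableRel G.Adj› = Classical.decRel G.Adj := Subsingleton.elim _ _
  simp only [Aalpha, add_mulVec, smul_mulVec, Pi.add_apply, Pi.smul_apply, smul_eq_mul,
    mulVec_diagonal, adjMatrix_mulVec_apply]
  ring

namespace Stepwise

variable {n : ℕ} {hn : 0 < n} {G : SimpleGraph (Fin n)}

lemma adj_of_le (hG : Stepwise hn G) {i k : ℕ} (hki : k < i) (hin : i ≤ n)
    (hik : G.Adj (vx hn i) (vx hn k)) {j : ℕ} (hj : 1 ≤ j) (hjk : j ≤ k) :
    G.Adj (vx hn i) (vx hn j) := by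
  obtain rfl | hjk := hjk.eq_or_lt
  · exact hik
  · exact hG i k (by omega) hki hin hik i j hj (by omega) le_rfl hjk.le

lemma not_adj_of_le (hG : Stepwise hn G) {i j : ℕ} (hj : 1 ≤ j) (hji : j < i) (hin : i ≤ n)
    (hij : ¬ G.Adj (vx hn i) (vx hn j)) {l : ℕ} (hjl : j ≤ l) (hln : l ≤ n) :
    ¬ G.Adj (vx hn i) (vx hn l) := by
  intro hil
  rcases lt_trichotomy l i with hli | rfl | hil'
  · exact hij (hG.adj_of_le hli hin hil hj hjl)
  · exact G.irrefl hil
  · exact hij (hG l i (by omega) hil' hln hil.symm i j hj hji hil'.le (by omega))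

end Stepwise

lemma neighborFinset_vx_eq_image_Icc {n : ℕ} (hn : 0 < n) (G : SimpleGraph (Fin n))
    [DecidableRel G.Adj] {i b : ℕ} (hbn : b ≤ n)
    (hadj : ∀ j, 1 ≤ j → j ≤ n → (G.Adj (vx hn i) (vx hn j) ↔ j ≤ b)) :
    G.neighborFinset (vx hn i) = (Finset.Icc 1 b).image (vx hn) := by
  ext u
  rw [mem_neighborFinset, Finset.mem_image]
  constructor
  · intro hu
    refine ⟨u + 1, Finset.mem_Icc.2 ⟨by omega, ?_⟩, vx_val_add_one hn u⟩
    exact (hadj _ (by omega) (by omega)).1 (by rwa [vx_val_add_one])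
  · rintro ⟨j, hj, rfl⟩
    rw [Finset.mem_Icc] at hj
    exact (hadj j hj.1 (by omega)).2 hj.2

lemma eigen_eq_of_neighborFinset_eq_image_Icc {n : ℕ} (hn : 0 < n) (G : SimpleGraph (Fin n))
    [DecidableRel G.Adj] {α ρ : ℝ} {x : Fin n → ℝ} (hev : Aalpha G α *ᵥ x = ρ • x)
    {v : Fin n} {b : ℕ} (hbn : b ≤ n)
    (hv : G.neighborFinset v = (Finset.Icc 1 b).image (vx hn)) :
    ρ * x v = α * b * x v + (1 - α) * ∑ j ∈ Finset.Icc 1 b, x (vx hn j) := by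
  have hinj : Set.InjOn (vx hn) (Finset.Icc 1 b) :=
    (vx_injOn hn).mono fun j hj => by simp only [Finset.coe_Icc, Set.mem_Icc] at hj ⊢; omega
  have hdeg : G.degree v = b := by
    rw [← card_neighborFinset_eq_degree, hv, Finset.card_image_of_injOn hinj, Nat.card_Icc]
    omega
  rw [← smul_eq_mul, ← Pi.smul_apply, ← hev, Aalpha_mulVec_apply, hv, Finset.sum_image hinj, hdeg]

lemma sum_Icc_one_add_sum_Icc {M : Type*} [AddCommMonoid M] (f : ℕ → M) {q k : ℕ}
    (hq : 1 ≤ q) (hqk : q ≤ k + 1) :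
    ∑ j ∈ Finset.Icc 1 (q - 1), f j + ∑ j ∈ Finset.Icc q k, f j = ∑ j ∈ Finset.Icc 1 k, f j := by
  have Icc_one : ∀ b, Finset.Icc 1 b = Finset.Ioc 0 b := fun b => by
    rw [← Finset.Icc_add_one_left_eq_Ioc, zero_add]
  obtain ⟨m, rfl⟩ : ∃ m, q = m + 1 := ⟨q - 1, by omega⟩
  rw [add_tsub_cancel_right, Icc_one, Icc_one, Finset.Icc_add_one_left_eq_Ioc]
  exact Finset.sum_Ioc_consecutive f (Nat.zero_le m) (by omega)

theorem stmt14_general {n : ℕ} (hn : 0 < n) (G : SimpleGraph (Fin n)) (hstep : Stepwise hn G)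
    (p q h k : ℕ) (hq2 : 2 ≤ q) (hqk : q < k) (hkh : k < h) (hhp : h < p) (hpn : p ≤ n)
    (hpq : ¬ G.Adj (vx hn p) (vx hn q))
    (hpj : ∀ j, 1 ≤ j → j < q → G.Adj (vx hn p) (vx hn j))
    (hhk : G.Adj (vx hn h) (vx hn k))
    (hhj : ∀ j, k < j → j ≤ n → ¬ G.Adj (vx hn h) (vx hn j))
    (α : ℝ) (ρ₁ : ℝ) (x : Fin n → ℝ)
    (hev : (Aalpha G α).mulVec x = ρ₁ • x) :
    (ρ₁ - (k : ℝ) * α) * (x (vx hn h) - x (vx hn p)) =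
      ((k : ℝ) - (q : ℝ) + 1) * α * x (vx hn p) +
        (1 - α) * ∑ j ∈ Finset.Icc q k, x (vx hn j) := by
  classical
  have nbrH : G.neighborFinset (vx hn h) = (Finset.Icc 1 k).image (vx hn) :=
    neighborFinset_vx_eq_image_Icc hn G (by omega) fun j hj hjn =>
      ⟨fun hadj => by_contra fun hkj => hhj j (by omega) hjn hadj,
        hstep.adj_of_le hkh (by omega) hhk hj⟩
  have nbrP : G.neighborFinset (vx hn p) = (Finset.Icc 1 (q - 1)).image (vx hn) :=
    neighborFinset_vx_eq_image_Icc hn G (by omega) fun j hj hjn =>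
      ⟨fun hadj => by_contra fun hjq =>
          hstep.not_adj_of_le (by omega) (by omega) hpn hpq (by omega) hjn hadj,
        fun hjq => hpj j hj (by omega)⟩
  have eqH := eigen_eq_of_neighborFinset_eq_image_Icc hn G hev (by omega) nbrH
  have eqP := eigen_eq_of_neighborFinset_eq_image_Icc hn G hev (by omega) nbrP
  rw [Nat.cast_pred (by omega)] at eqP
  have hsplit := sum_Icc_one_add_sum_Icc (fun j => x (vx hn j)) (q := q) (k := k) (by omega)
    (by omega)
  linear_combination eqH - eqP - (1 - α) * hsplit

theorem stmt14 {n : ℕ} (hn : 0 < n) (G : SimpleGraph (Fin n)) (hconn : G.Connected)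
    (hth : IsThreshold G) (hstep : Stepwise hn G)
    (p q h k : ℕ) (hq2 : 2 ≤ q) (hqk : q < k) (hkh : k < h) (hhp : h < p) (hpn : p ≤ n)
    (hpq : ¬ G.Adj (vx hn p) (vx hn q))
    (hpj : ∀ j, 1 ≤ j → j < q → G.Adj (vx hn p) (vx hn j))
    (hiq : ∀ i, q < i → i < p → G.Adj (vx hn i) (vx hn q))
    (hhk : G.Adj (vx hn h) (vx hn k))
    (hhj : ∀ j, k < j → j ≤ n → ¬ G.Adj (vx hn h) (vx hn j))
    (hik : ∀ i, h < i → i ≤ n → ¬ G.Adj (vx hn i) (vx hn k))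
    (α : ℝ) (hα0 : 0 ≤ α) (hα1 : α < 1)
    (ρ₁ : ℝ) (x : Fin n → ℝ) (hx : ∀ v, 0 < x v)
    (hev : (Aalpha G α).mulVec x = ρ₁ • x)
    (hmax : IsMaxEigenvalue (Aalpha G α) ρ₁) :
    (ρ₁ - (k : ℝ) * α) * (x (vx hn h) - x (vx hn p)) =
      ((k : ℝ) - (q : ℝ) + 1) * α * x (vx hn p) +
        (1 - α) * ∑ j ∈ Finset.Icc q k, x (vx hn j) :=
  stmt14_general hn G hstep p q h k hq2 hqk hkh hhp hpn hpq hpj hhk hhj α ρ₁ x hev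
end

section
/- For n ≥ 4, the signless Laplacian spectral radius of S_{n,2n-1} = K₂ ∨ (K_{1,2} ∪ (n-5)K₁) satisfies q(S_{n,2n-1}) ≥ n + 1.75. -/
open Matrix SimpleGraph

noncomputable def signlessLaplacian {n : ℕ} (G : SimpleGraph (Fin n)) :
    Matrix (Fin n) (Fin n) ℝ :=
  letI := Classical.decRel G.Adj
  Matrix.diagonal (fun v => (G.degree v : ℝ)) + G.adjMatrix ℝ

/-- The quasi-star graph `S_{n,2n-1} = K₂ ∨ (K_{1,2} ∪ (n-5)K₁)`:
vertices `0,1` are universal, and vertex `2` (the star centre) is joined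
to vertices `3` and `4`. -/
def quasiStar2n1 (n : ℕ) : SimpleGraph (Fin n) :=
  SimpleGraph.fromRel (fun a b => a.val < 2 ∨ (a.val = 2 ∧ b.val < 5))

/-!
For `n = 4` the graph is `K₄`, which is `3`-regular, so the all-ones vector is an eigenvector of
`Q` for the eigenvalue `6`. For `n ≥ 5`, `q` is at least the Rayleigh quotient of the test vector
with weight `4n` on the two universal vertices, `14` on the star centre, `11` on its two leaves
and `8` on the isolated vertices. That quotient is
`(32n³ + 128n² + 64n + 1486) / (32n² + 64n + 118)`, which exceeds `n + 7/4` because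
`8n² - 166n + 1279.5` has negative discriminant.
-/

open Finset Unitary

theorem Fin.sum_eq_sum_castLE_add_of_forall_le {M : Type*} [AddCommMonoid M] {n k : ℕ}
    (hk : k ≤ n) {f : Fin n → M} {c : M} (hf : ∀ i : Fin n, k ≤ i.val → f i = c) :
    ∑ i, f i = ∑ i : Fin k, f (Fin.castLE hk i) + (n - k) • c := by
  obtain ⟨m, rfl⟩ := Nat.exists_eq_add_of_le hk
  rw [Fin.sum_univ_add, Nat.add_sub_cancel_left]
  congr 1
  simp [hf]

theorem IsMaxEigenvalue.dotProduct_mulVec_le {n : ℕ} {M : Matrix (Fin n) (Fin n) ℝ} {q : ℝ}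
    (hM : M.IsHermitian) (hq : IsMaxEigenvalue M q) (x : Fin n → ℝ) :
    x ⬝ᵥ (M *ᵥ x) ≤ q * (x ⬝ᵥ x) := by
  have heig (i : Fin n) : hM.eigenvalues i ≤ q :=
    hq.2 _ _
      (fun h => hM.eigenvectorBasis.orthonormal.ne_zero i (by ext j; simpa using congrFun h j))
      (hM.mulVec_eigenvectorBasis i)
  have hdiag : q • 1 - M =
      conjStarAlgAut ℝ _ hM.eigenvectorUnitary (diagonal fun i => q - hM.eigenvalues i) := by
    conv_lhs => rw [hM.spectral_theorem]
    rw [← diagonal_sub, ← smul_one_eq_diagonal]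
    simp [mul_sub, sub_mul]
  have hpsd : (q • 1 - M).PosSemidef := by
    rw [hdiag, conjStarAlgAut_apply]
    exact (PosSemidef.diagonal fun i => sub_nonneg.2 (heig i)).mul_mul_conjTranspose_same _
  simpa only [star_trivial, sub_mulVec, dotProduct_sub, smul_mulVec, one_mulVec,
    dotProduct_smul, smul_eq_mul, sub_nonneg] using hpsd.dotProduct_mulVec_nonneg x

theorem isHermitian_signlessLaplacian {n : ℕ} (G : SimpleGraph (Fin n)) :
    (signlessLaplacian G).IsHermitian :=
  letI := Classical.decRel G.Adj
  (isHermitian_diagonal _).add (G.isHermitian_adjMatrix ℝ)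

section signlessLaplacian

variable {n : ℕ} (G : SimpleGraph (Fin n)) [DecidableRel G.Adj]

theorem signlessLaplacian_mulVec_apply (x : Fin n → ℝ) (i : Fin n) :
    (signlessLaplacian G *ᵥ x) i = ∑ j ∈ G.neighborFinset i, (x i + x j) := by
  rw [signlessLaplacian, add_mulVec, Pi.add_apply, mulVec_diagonal, adjMatrix_mulVec_apply,
    sum_add_distrib, sum_const, card_neighborFinset_eq_degree, nsmul_eq_mul]
  congr!

theorem signlessLaplacian_mulVec_one_of_isRegularOfDegree {d : ℕ} (h : G.IsRegularOfDegree d) :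
    signlessLaplacian G *ᵥ 1 = (2 * d : ℝ) • 1 := by
  ext i
  simp [signlessLaplacian_mulVec_apply, h i]
  ring

end signlessLaplacian

theorem quasiStar2n1_adj {n : ℕ} {a b : Fin n} :
    (quasiStar2n1 n).Adj a b ↔ a ≠ b ∧
      (a.val < 2 ∨ b.val < 2 ∨ (a.val = 2 ∧ b.val < 5) ∨ (b.val = 2 ∧ a.val < 5)) := by
  simp only [quasiStar2n1, fromRel_adj]
  tauto

instance {n : ℕ} : DecidableRel (quasiStar2n1 n).Adj := fun _ _ =>
  decidable_of_iff' _ quasiStar2n1_adj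

theorem quasiStar2n1_adj_of_five_le {n : ℕ} {i j : Fin n} (hj : 5 ≤ j.val) :
    (quasiStar2n1 n).Adj i j ↔ i.val < 2 := by
  rw [quasiStar2n1_adj, Fin.ne_iff_vne]
  omega

theorem quasiStar2n1_four_isRegularOfDegree : (quasiStar2n1 4).IsRegularOfDegree 3 := by
  unfold IsRegularOfDegree
  decide

def testVector (n : ℕ) (i : Fin n) : ℝ :=
  if i.val < 2 then 4 * n else if i.val = 2 then 14 else if i.val < 5 then 11 else 8

theorem testVector_of_five_le {n : ℕ} {i : Fin n} (hi : 5 ≤ i.val) : testVector n i = 8 := by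
  simp only [testVector]
  split_ifs <;> first | rfl | omega

theorem signlessLaplacian_quasiStar2n1_mulVec_testVector {n : ℕ} (hn : 5 ≤ n) (i : Fin n) :
    (signlessLaplacian (quasiStar2n1 n) *ᵥ testVector n) i =
      if i.val < 2 then (4 * n ^ 2 + 8 * n - 4 : ℝ) else if i.val = 2 then 8 * n + 78
      else if i.val < 5 then 8 * n + 47 else 8 * n + 16 := by
  have htail (j : Fin n) (hj : 5 ≤ j.val) :
      (if (quasiStar2n1 n).Adj i j then testVector n i + testVector n j else 0) =
        if i.val < 2 then testVector n i + 8 else 0 := by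
    simp only [quasiStar2n1_adj_of_five_le hj, testVector_of_five_le hj]
  rw [signlessLaplacian_mulVec_apply, neighborFinset_eq_filter, sum_filter,
    Fin.sum_eq_sum_castLE_add_of_forall_le hn htail]
  obtain ⟨i, hi⟩ := i
  rcases (by omega : 5 ≤ i ∨ i = 0 ∨ i = 1 ∨ i = 2 ∨ i = 3 ∨ i = 4)
    with h5 | rfl | rfl | rfl | rfl | rfl
  · simp [Fin.sum_univ_five, quasiStar2n1_adj, testVector, Fin.ext_iff, show ¬ i ≤ 1 by omega,
      show i ≠ 0 by omega, show i ≠ 1 by omega, show i ≠ 2 by omega, show ¬ i < 5 by omega]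
    ring
  all_goals simp [Fin.sum_univ_five, quasiStar2n1_adj, testVector, Fin.ext_iff, Nat.cast_sub hn]
  all_goals ring

theorem testVector_dotProduct_mulVec {n : ℕ} (hn : 5 ≤ n) :
    testVector n ⬝ᵥ (signlessLaplacian (quasiStar2n1 n) *ᵥ testVector n) =
      32 * n ^ 3 + 128 * n ^ 2 + 64 * n + 1486 := by
  have htail (j : Fin n) (hj : 5 ≤ j.val) :
      testVector n j * (signlessLaplacian (quasiStar2n1 n) *ᵥ testVector n) j =
        8 * (8 * n + 16) := by
    rw [signlessLaplacian_quasiStar2n1_mulVec_testVector hn, testVector_of_five_le hj]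
    simp [show ¬ j.val < 2 by omega, show j.val ≠ 2 by omega, show ¬ j.val < 5 by omega]
  rw [dotProduct, Fin.sum_eq_sum_castLE_add_of_forall_le hn htail]
  simp [Fin.sum_univ_five, signlessLaplacian_quasiStar2n1_mulVec_testVector hn, testVector,
    Nat.cast_sub hn]
  ring

theorem testVector_dotProduct_self {n : ℕ} (hn : 5 ≤ n) :
    testVector n ⬝ᵥ testVector n = 32 * n ^ 2 + 64 * n + 118 := by
  have htail (j : Fin n) (hj : 5 ≤ j.val) : testVector n j * testVector n j = 64 := by
    rw [testVector_of_five_le hj]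
    norm_num
  rw [dotProduct, Fin.sum_eq_sum_castLE_add_of_forall_le hn htail]
  simp [Fin.sum_univ_five, testVector, Nat.cast_sub hn]
  ring

theorem stmt18 {n : ℕ} (hn : 4 ≤ n)
    (q : ℝ) (hq : IsMaxEigenvalue (signlessLaplacian (quasiStar2n1 n)) q) :
    (n : ℝ) + 1.75 ≤ q := by
  rcases hn.eq_or_lt with rfl | h5
  · have h6 : (2 * 3 : ℝ) ≤ q := hq.2 _ 1 one_ne_zero
      (signlessLaplacian_mulVec_one_of_isRegularOfDegree _ quasiStar2n1_four_isRegularOfDegree)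
    norm_num at h6 ⊢
    linarith
  · have hq' := hq.dotProduct_mulVec_le (isHermitian_signlessLaplacian _) (testVector n)
    rw [testVector_dotProduct_mulVec h5, testVector_dotProduct_self h5] at hq'
    have hnorm : (0 : ℝ) < 32 * n ^ 2 + 64 * n + 118 := by positivity
    refine le_of_mul_le_mul_right ?_ hnorm
    nlinarith [sq_nonneg (8 * (n : ℝ) - 83)]
end
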